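/- arXiv:1910.02418 — 6 statements merged into one kernel-verified Lean document; each statement's English description precedes it below -/
import Mathlib

section
/- For every integer n ≥ 1, the number f(n) of relatively prime subsets of {1, 2, ..., n} satisfies 2^n − 2^⌊n/2⌋ − n·2^⌊n/3⌋ ≤ f(n) ≤ 2^n − 2^⌊n/2⌋. -/
/-- `f n` is the number of relatively prime subsets of `{1, 2, ..., n}`,
i.e. subsets `A` with `gcd A = 1` (such subsets are automatically nonempty). -/
def f (n : ℕ) : ℕ :=
  ((Finset.Icc 1 n).powerset.filter (fun A => A.gcd id = 1)).card

/-!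
A subset of `{1, …, n}` fails to be relatively prime exactly when all its elements share a
divisor `d ≥ 2`. Every set of even numbers is of this kind, which gives
`2 ^ ⌊n/2⌋` such subsets; conversely each of them lies among the multiples of `2` or of some
`d ∈ [3, n]`, and the `⌊n/d⌋ ≤ ⌊n/3⌋` multiples of such a `d` have at most `2 ^ ⌊n/3⌋` subsets.
-/

open Finset

def nonCoprimeSubsets (n : ℕ) : Finset (Finset ℕ) :=
  {A ∈ (Icc 1 n).powerset | A.gcd id ≠ 1}

lemma card_filter_dvd_Icc_one (n d : ℕ) : #{x ∈ Icc 1 n | d ∣ x} = n / d :=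
  Nat.Ioc_filter_dvd_card_eq_div n d

lemma f_add_card_nonCoprimeSubsets (n : ℕ) : f n + #(nonCoprimeSubsets n) = 2 ^ n := by
  rw [f, nonCoprimeSubsets, card_filter_add_card_filter_not, card_powerset, Nat.card_Icc,
    Nat.add_sub_cancel]

lemma powerset_filter_dvd_subset_nonCoprimeSubsets (n : ℕ) {d : ℕ} (hd : d ≠ 1) :
    {x ∈ Icc 1 n | d ∣ x}.powerset ⊆ nonCoprimeSubsets n := by
  intro A hA
  rw [mem_powerset] at hA
  refine mem_filter.mpr ⟨mem_powerset.mpr (hA.trans (filter_subset _ _)), fun hgcd => hd ?_⟩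
  exact Nat.dvd_one.mp (hgcd ▸ Finset.dvd_gcd fun x hx => (mem_filter.mp (hA hx)).2)

lemma nonCoprimeSubsets_subset_powerset_multiples (n : ℕ) :
    nonCoprimeSubsets n ⊆ {x ∈ Icc 1 n | 2 ∣ x}.powerset ∪
      (Icc 3 n).biUnion fun d => {x ∈ Icc 1 n | d ∣ x}.powerset := by
  intro A hA
  obtain ⟨hAn, hgcd⟩ := mem_filter.mp hA
  rw [mem_powerset] at hAn
  have hA_dvd : A ⊆ {x ∈ Icc 1 n | A.gcd id ∣ x} :=
    fun _ ha => mem_filter.mpr ⟨hAn ha, Finset.gcd_dvd ha⟩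
  by_cases h2 : A ⊆ {x ∈ Icc 1 n | 2 ∣ x}
  · exact mem_union_left _ (mem_powerset.mpr h2)
  have hgcd2 : A.gcd id ≠ 2 := fun h => h2 (h ▸ hA_dvd)
  obtain ⟨a, ha⟩ : A.Nonempty := nonempty_iff_ne_empty.mpr fun h => h2 (h ▸ empty_subset _)
  have ha_mem := mem_Icc.mp (hAn ha)
  have hle : A.gcd id ≤ a := Nat.le_of_dvd ha_mem.1 (Finset.gcd_dvd ha)
  have hpos : A.gcd id ≠ 0 := fun h0 => by
    have := Finset.gcd_dvd (f := id) ha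
    rw [h0, zero_dvd_iff, id] at this
    omega
  refine mem_union_right _ (mem_biUnion.mpr ⟨A.gcd id, mem_Icc.mpr ⟨?_, ?_⟩, ?_⟩)
  · omega
  · omega
  · exact mem_powerset.mpr hA_dvd

lemma card_nonCoprimeSubsets_le (n : ℕ) :
    #(nonCoprimeSubsets n) ≤ 2 ^ (n / 2) + n * 2 ^ (n / 3) := by
  have hbig : ∑ d ∈ Icc 3 n, #{x ∈ Icc 1 n | d ∣ x}.powerset ≤ n * 2 ^ (n / 3) :=
    calc ∑ d ∈ Icc 3 n, #{x ∈ Icc 1 n | d ∣ x}.powerset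
        ≤ ∑ _d ∈ Icc 3 n, 2 ^ (n / 3) := sum_le_sum fun d hd => by
          rw [card_powerset, card_filter_dvd_Icc_one]
          exact Nat.pow_le_pow_right two_pos (Nat.div_le_div_left (mem_Icc.mp hd).1 three_pos)
      _ ≤ n * 2 ^ (n / 3) := by
          rw [sum_const, Nat.card_Icc, smul_eq_mul]
          exact Nat.mul_le_mul_right _ (by omega)
  calc #(nonCoprimeSubsets n)
      ≤ #({x ∈ Icc 1 n | 2 ∣ x}.powerset ∪
          (Icc 3 n).biUnion fun d => {x ∈ Icc 1 n | d ∣ x}.powerset) :=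
        card_le_card (nonCoprimeSubsets_subset_powerset_multiples n)
    _ ≤ #{x ∈ Icc 1 n | 2 ∣ x}.powerset + ∑ d ∈ Icc 3 n, #{x ∈ Icc 1 n | d ∣ x}.powerset :=
        (card_union_le _ _).trans (Nat.add_le_add_left card_biUnion_le _)
    _ ≤ 2 ^ (n / 2) + n * 2 ^ (n / 3) := by
        rw [card_powerset, card_filter_dvd_Icc_one]
        exact Nat.add_le_add_left hbig _

lemma two_pow_le_card_nonCoprimeSubsets (n : ℕ) : 2 ^ (n / 2) ≤ #(nonCoprimeSubsets n) := by
  rw [← card_filter_dvd_Icc_one n 2, ← card_powerset]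
  exact card_le_card (powerset_filter_dvd_subset_nonCoprimeSubsets n (by decide))

theorem stmt_0_general (n : ℕ) :
    (2 : ℤ) ^ n - 2 ^ (n / 2) - n * 2 ^ (n / 3) ≤ (f n : ℤ) ∧
      (f n : ℤ) ≤ 2 ^ n - 2 ^ (n / 2) := by
  have hsplit := f_add_card_nonCoprimeSubsets n
  have hlower := two_pow_le_card_nonCoprimeSubsets n
  have hupper := card_nonCoprimeSubsets_le n
  zify at hsplit hlower hupper
  constructor <;> linarith

theorem stmt_0 (n : ℕ) (hn : 1 ≤ n) :
    (2 : ℤ) ^ n - 2 ^ (n / 2) - n * 2 ^ (n / 3) ≤ (f n : ℤ) ∧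
      (f n : ℤ) ≤ 2 ^ n - 2 ^ (n / 2) :=
  stmt_0_general n
end

section
/- For every integer n ≥ 1, f(n) = Σ_{d=1}^{n} μ(d)·(2^⌊n/d⌋ − 1), where μ is the Möbius function. -/
/-! Möbius inversion: `[gcd A = 1] = ∑_{d ∣ gcd A} μ d`, and after exchanging the sums, `d` divides
the gcd of exactly the nonempty subsets of the `⌊n/d⌋` multiples of `d` in `{1, ..., n}`.
The empty set is harmless because its gcd is `0` and `Nat.divisors 0 = ∅`. -/

open Finset ArithmeticFunction ArithmeticFunction.Moebius

theorem ArithmeticFunction.sum_divisors_moebius (k : ℕ) :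
    ∑ d ∈ k.divisors, μ d = if k = 1 then 1 else 0 := by
  simpa only [coe_mul_zeta_apply, one_apply] using
    congrArg (fun g : ArithmeticFunction ℤ => g k) moebius_mul_coe_zeta

theorem Finset.mem_divisors_gcd_iff {A : Finset ℕ} (hA : 0 ∉ A) {d : ℕ} :
    d ∈ (A.gcd id).divisors ↔ A.Nonempty ∧ ∀ a ∈ A, d ∣ a := by
  have hgcd : A.gcd id ≠ 0 ↔ A.Nonempty := by
    rw [Ne, gcd_eq_zero_iff]
    refine ⟨fun h => ?_, fun ⟨a, ha⟩ h => hA (h a ha ▸ ha)⟩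
    by_contra hempty
    exact h fun a ha => (hempty ⟨a, ha⟩).elim
  rw [Nat.mem_divisors, dvd_gcd_iff, hgcd, and_comm]
  rfl

theorem card_filter_dvd_Icc (n d : ℕ) : #{a ∈ Icc 1 n | d ∣ a} = n / d := by
  rw [← Nat.Ioc_filter_dvd_card_eq_div]
  rfl

theorem card_powerset_erase_empty {α : Type*} [DecidableEq α] (s : Finset α) :
    #(s.powerset.erase ∅) = 2 ^ #s - 1 := by
  rw [card_erase_of_mem (empty_mem_powerset s), card_powerset]

theorem mem_powerset_Icc_and_mem_divisors_gcd_iff (n : ℕ) (A : Finset ℕ) (d : ℕ) :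
    A ∈ (Icc 1 n).powerset ∧ d ∈ (A.gcd id).divisors ↔
      A ∈ {a ∈ Icc 1 n | d ∣ a}.powerset.erase ∅ ∧ d ∈ Icc 1 n := by
  simp only [mem_powerset, mem_erase, subset_iff, mem_filter, ne_eq, ← nonempty_iff_ne_empty]
  constructor
  · rintro ⟨hA, hd⟩
    have hA0 : 0 ∉ A := fun h0 => by simpa using hA h0
    obtain ⟨⟨a, ha⟩, hdvd⟩ := (mem_divisors_gcd_iff hA0).1 hd
    have ha' := mem_Icc.1 (hA ha)
    refine ⟨⟨⟨a, ha⟩, fun b hb => ⟨hA hb, hdvd b hb⟩⟩, mem_Icc.2 ⟨?_, ?_⟩⟩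
    · exact Nat.pos_of_dvd_of_pos (hdvd a ha) ha'.1
    · exact (Nat.le_of_dvd ha'.1 (hdvd a ha)).trans ha'.2
  · rintro ⟨⟨hne, hA⟩, -⟩
    have hA0 : 0 ∉ A := fun h0 => by simpa using (hA h0).1
    exact ⟨fun b hb => (hA hb).1, (mem_divisors_gcd_iff hA0).2 ⟨hne, fun b hb => (hA hb).2⟩⟩

open ArithmeticFunction ArithmeticFunction.Moebius in
theorem stmt_1_general (n : ℕ) :
    (f n : ℤ) = ∑ d ∈ Finset.Icc 1 n, (μ d : ℤ) * (2 ^ (n / d) - 1) := by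
  calc (f n : ℤ) = ∑ A ∈ (Icc 1 n).powerset, if A.gcd id = 1 then (1 : ℤ) else 0 := by
        simp only [f, card_filter, Nat.cast_sum, Nat.cast_ite, Nat.cast_one, Nat.cast_zero]
    _ = ∑ A ∈ (Icc 1 n).powerset, ∑ d ∈ (A.gcd id).divisors, μ d := by
        simp only [sum_divisors_moebius]
    _ = ∑ d ∈ Icc 1 n, ∑ _A ∈ {a ∈ Icc 1 n | d ∣ a}.powerset.erase ∅, μ d :=
        sum_comm' (mem_powerset_Icc_and_mem_divisors_gcd_iff n)
    _ = ∑ d ∈ Icc 1 n, (μ d : ℤ) * (2 ^ (n / d) - 1) := by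
        refine sum_congr rfl fun d _ => ?_
        rw [sum_const, card_powerset_erase_empty, card_filter_dvd_Icc, nsmul_eq_mul, mul_comm,
          Nat.cast_sub Nat.one_le_two_pow]
        push_cast
        rfl

open ArithmeticFunction ArithmeticFunction.Moebius in
theorem stmt_1 (n : ℕ) (hn : 1 ≤ n) :
    (f n : ℤ) = ∑ d ∈ Finset.Icc 1 n, (μ d : ℤ) * (2 ^ (n / d) - 1) :=
  stmt_1_general n
end

section
/- For every integer n ≥ 1, g(n) = Σ f(⌊n/d⌋), where the sum is over all integers d with 2 ≤ d ≤ n and gcd(d, n+1) = 1. -/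
/-- `g n` is the number of nonempty subsets `A` of `{1, 2, ..., n}` with
`gcd A > 1` and `gcd (gcd A) (n+1) = 1`. -/
def g (n : ℕ) : ℕ :=
  ((Finset.Icc 1 n).powerset.filter
    (fun A => 1 < A.gcd id ∧ Nat.gcd (A.gcd id) (n + 1) = 1)).card

namespace Finset

theorem gcd_id_le_of_subset_Icc {A : Finset ℕ} {n : ℕ} (hA : A ⊆ Icc 1 n) : A.gcd id ≤ n := by
  obtain rfl | ⟨a, ha⟩ := A.eq_empty_or_nonempty
  · simp
  have ha' := mem_Icc.1 (hA ha)
  exact (Nat.le_of_dvd ha'.1 (gcd_dvd (f := id) ha)).trans ha'.2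

theorem gcd_id_image_mul_left (B : Finset ℕ) (d : ℕ) : (B.image (d * ·)).gcd id = d * B.gcd id := by
  simpa [gcd_image, Function.comp_def] using gcd_mul_left (s := B) (f := id) (a := d)

theorem image_div_image_mul_left {B : Finset ℕ} {d : ℕ} (hd : 0 < d) :
    (B.image (d * ·)).image (· / d) = B := by
  rw [image_image]
  conv_rhs => rw [← image_id' (s := B)]
  exact image_congr fun b _ => Nat.mul_div_cancel_left b hd

theorem image_mul_left_image_div {A : Finset ℕ} {d : ℕ} (h : ∀ a ∈ A, d ∣ a) :
    (A.image (· / d)).image (d * ·) = A := by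
  rw [image_image]
  conv_rhs => rw [← image_id' (s := A)]
  exact image_congr fun a ha => Nat.mul_div_cancel' (h a ha)

end Finset

open Finset

theorem card_filter_gcd_id_eq (n : ℕ) {d : ℕ} (hd : 0 < d) :
    ((Icc 1 n).powerset.filter (fun A => A.gcd id = d)).card = f (n / d) := by
  symm
  refine card_nbij' (image (d * ·)) (image (· / d)) ?_ ?_ ?_ ?_
  · intro B hB
    simp only [coe_filter, mem_powerset, Set.mem_ofPred_eq] at hB ⊢
    refine ⟨fun x hx => ?_, by rw [gcd_id_image_mul_left, hB.2, mul_one]⟩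
    obtain ⟨b, hb, rfl⟩ := mem_image.1 hx
    have hb' := mem_Icc.1 (hB.1 hb)
    exact mem_Icc.2 ⟨Nat.one_le_iff_ne_zero.2 (Nat.mul_ne_zero hd.ne' (by omega)),
      (Nat.mul_le_mul_left d hb'.2).trans (Nat.mul_div_le n d)⟩
  · intro A hA
    simp only [coe_filter, mem_powerset, Set.mem_ofPred_eq] at hA ⊢
    obtain ⟨hsub, hgcd⟩ := hA
    have hdvd : ∀ a ∈ A, d ∣ a := fun a ha => hgcd ▸ gcd_dvd ha
    refine ⟨fun x hx => ?_, ?_⟩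
    · obtain ⟨a, ha, rfl⟩ := mem_image.1 hx
      have ha' := mem_Icc.1 (hsub ha)
      exact mem_Icc.2 ⟨Nat.div_pos (Nat.le_of_dvd (by omega) (hdvd a ha)) hd,
        Nat.div_le_div_right ha'.2⟩
    · have h := congrArg (fun s => s.gcd id) (image_mul_left_image_div hdvd)
      simp only [gcd_id_image_mul_left, hgcd] at h
      exact (Nat.mul_eq_left hd.ne').1 h
  · intro B _
    exact image_div_image_mul_left hd
  · intro A hA
    exact image_mul_left_image_div fun a ha => (mem_filter.1 hA).2 ▸ gcd_dvd ha

theorem stmt_2_general (n : ℕ) :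
    g n = ∑ d ∈ (Finset.Icc 2 n).filter (fun d => Nat.gcd d (n + 1) = 1),
      f (n / d) := by
  rw [g, card_eq_sum_card_fiberwise (f := fun A => A.gcd id)]
  · refine sum_congr rfl fun d hd => ?_
    obtain ⟨hd2, hcop⟩ := mem_filter.1 hd
    rw [filter_filter, ← card_filter_gcd_id_eq n (by grind)]
    congr 1
    refine filter_congr fun A _ => ?_
    grind
  · intro A hA
    simp only [coe_filter, mem_powerset, Set.mem_ofPred_eq] at hA ⊢
    exact ⟨mem_Icc.2 ⟨hA.2.1, gcd_id_le_of_subset_Icc hA.1⟩, hA.2.2⟩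

theorem stmt_2 (n : ℕ) (hn : 1 ≤ n) :
    g n = ∑ d ∈ (Finset.Icc 2 n).filter (fun d => Nat.gcd d (n + 1) = 1),
      f (n / d) :=
  stmt_2_general n
end

section
/- For every integer n ≥ 51, f(n)² − f(n−4)·f(n+4) > 0. -/
open Finset

def nonCoprimeCount (n : ℕ) : ℕ :=
  ((Icc 1 n).powerset.filter (fun A => A.gcd id ≠ 1)).card

lemma f_add_nonCoprimeCount (n : ℕ) : f n + nonCoprimeCount n = 2 ^ n := by
  rw [f, nonCoprimeCount, card_filter_add_card_filter_not, card_powerset, Nat.card_Icc,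
    Nat.add_sub_cancel]

lemma card_powerset_filter_dvd (n d : ℕ) :
    ((Icc 1 n).filter (d ∣ ·)).powerset.card = 2 ^ (n / d) := by
  rw [card_powerset, ← Nat.Ioc_filter_dvd_card_eq_div n d, ← Icc_add_one_left_eq_Ioc, zero_add]

lemma two_pow_div_le_nonCoprimeCount (n : ℕ) {d : ℕ} (hd : d ≠ 1) :
    2 ^ (n / d) ≤ nonCoprimeCount n := by
  rw [← card_powerset_filter_dvd]
  refine card_le_card fun A hA => ?_
  rw [mem_powerset] at hA
  refine mem_filter.2 ⟨mem_powerset.2 (hA.trans (filter_subset _ _)), fun hgcd => hd ?_⟩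
  have hdvd : d ∣ A.gcd id := dvd_gcd fun a ha => (mem_filter.1 (hA ha)).2
  rwa [hgcd, Nat.dvd_one] at hdvd

lemma nonCoprimeCount_le (n : ℕ) : nonCoprimeCount n ≤ 1 + ∑ d ∈ Icc 2 n, 2 ^ (n / d) := by
  have hcover : (Icc 1 n).powerset.filter (fun A => A.gcd id ≠ 1) ⊆
      insert ∅ ((Icc 2 n).biUnion fun d => ((Icc 1 n).filter (d ∣ ·)).powerset) := by
    intro A hA
    obtain ⟨hAsub, hgcd⟩ := mem_filter.1 hA
    rw [mem_powerset] at hAsub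
    rcases A.eq_empty_or_nonempty with rfl | ⟨a, ha⟩
    · exact mem_insert_self _ _
    refine mem_insert_of_mem (mem_biUnion.2 ⟨A.gcd id, ?_, ?_⟩)
    · have ha' := mem_Icc.1 (hAsub ha)
      have hle : A.gcd id ≤ a := Nat.le_of_dvd (by omega) (gcd_dvd ha)
      have hpos : 0 < A.gcd id := Nat.pos_of_dvd_of_pos (gcd_dvd ha) ha'.1
      exact mem_Icc.2 ⟨by omega, hle.trans ha'.2⟩
    · exact mem_powerset.2 fun x hx => mem_filter.2 ⟨hAsub hx, gcd_dvd hx⟩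
  calc nonCoprimeCount n ≤ _ := card_le_card hcover
    _ ≤ _ := card_insert_le _ _
    _ ≤ ∑ d ∈ Icc 2 n, ((Icc 1 n).filter (d ∣ ·)).powerset.card + 1 :=
        Nat.add_le_add_right card_biUnion_le 1
    _ = 1 + ∑ d ∈ Icc 2 n, 2 ^ (n / d) := by simp only [card_powerset_filter_dvd, add_comm]

lemma lt_two_pow_div_six {n : ℕ} (hn : 36 ≤ n) : n < 2 ^ (n / 6) := by
  induction n using Nat.strong_induction_on with
  | _ n ih =>
    by_cases hsmall : n < 42
    · calc n < 2 ^ 6 := by omega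
        _ ≤ 2 ^ (n / 6) := Nat.pow_le_pow_right two_pos (by omega)
    · calc n ≤ 2 * (n - 6) := by omega
        _ < 2 * 2 ^ ((n - 6) / 6) := by have := ih (n - 6) (by omega) (by omega); omega
        _ = 2 ^ (n / 6) := by rw [← pow_succ']; congr 1; omega

lemma one_add_sum_two_pow_div_lt {n : ℕ} (hn : 36 ≤ n) :
    1 + ∑ d ∈ Icc 2 n, 2 ^ (n / d) < 2 * 2 ^ (n / 2) := by
  have htail : ∑ d ∈ Ioc 2 n, 2 ^ (n / d) ≤ n * 2 ^ (n / 3) := by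
    calc ∑ d ∈ Ioc 2 n, 2 ^ (n / d) ≤ ∑ _d ∈ Ioc 2 n, 2 ^ (n / 3) :=
          sum_le_sum fun d hd =>
            Nat.pow_le_pow_right two_pos (Nat.div_le_div_left (mem_Ioc.1 hd).1 three_pos)
      _ ≤ n * 2 ^ (n / 3) := by
          rw [sum_const, smul_eq_mul, Nat.card_Ioc]
          exact Nat.mul_le_mul_right _ (Nat.sub_le n 2)
  have hsmall : (n + 1) * 2 ^ (n / 3) ≤ 2 ^ (n / 2) :=
    calc (n + 1) * 2 ^ (n / 3) ≤ 2 ^ (n / 6) * 2 ^ (n / 3) :=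
          Nat.mul_le_mul_right _ (lt_two_pow_div_six hn)
      _ ≤ 2 ^ (n / 2) := by rw [← pow_add]; exact Nat.pow_le_pow_right two_pos (by omega)
  rw [add_one_mul] at hsmall
  rw [← add_sum_Ioc_eq_sum_Icc (by omega)]
  have : 1 < 2 ^ (n / 3) := Nat.one_lt_two_pow (by omega)
  omega

lemma f_add_two_pow_div_le {d : ℕ} (hd : d ≠ 1) (n : ℕ) : f n + 2 ^ (n / d) ≤ 2 ^ n :=
  f_add_nonCoprimeCount n ▸ Nat.add_le_add_left (two_pow_div_le_nonCoprimeCount n hd) _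

lemma two_pow_lt_f_add {n : ℕ} (hn : 36 ≤ n) : 2 ^ n < f n + 2 * 2 ^ (n / 2) :=
  f_add_nonCoprimeCount n ▸ Nat.add_lt_add_left
    ((nonCoprimeCount_le n).trans_lt (one_add_sum_two_pow_div_lt hn)) _

theorem stmt_6 (n : ℕ) (hn : 51 ≤ n) :
    (f n : ℤ) ^ 2 - f (n - 4) * f (n + 4) > 0 := by
  obtain ⟨m, rfl⟩ : ∃ m, n = m + 4 := ⟨n - 4, by omega⟩
  rw [Nat.add_sub_cancel, gt_iff_lt, sub_pos]
  set X : ℤ := 2 ^ m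
  set Y : ℤ := 2 ^ (m / 2)
  have hY : 0 < Y := by positivity
  have hf₀ : (f m : ℤ) ≤ X - Y := by
    have := f_add_two_pow_div_le (by norm_num : 2 ≠ 1) m; zify at this; linarith
  have hf₈ : (f (m + 8) : ℤ) ≤ 256 * X := by
    have := f_add_nonCoprimeCount (m + 8); zify at this; rw [pow_add] at this; linarith
  have hf₄ : 16 * X - 8 * Y < f (m + 4) := by
    have := two_pow_lt_f_add (n := m + 4) (by omega)
    rw [show (m + 4) / 2 = m / 2 + 2 by omega] at this
    zify at this; rw [pow_add, pow_add] at this; linarith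
  calc (f m : ℤ) * f (m + 8) ≤ (X - Y) * (256 * X) :=
        mul_le_mul hf₀ hf₈ (Int.natCast_nonneg _) (by linarith)
    _ < (16 * X - 8 * Y) ^ 2 := by nlinarith
    _ < f (m + 4) ^ 2 := pow_lt_pow_left₀ hf₄ (by linarith) two_ne_zero
end

section
/- There exists a positive integer n₀ such that for every integer n ≥ n₀, g(6n−2)² > g(6n)·g(6n−4); equivalently, g(6n−2)/g(6n−4) > g(6n)/g(6n−2). -/
open Finset

lemma gcd_image_mul_left (d : ℕ) (B : Finset ℕ) : (B.image (d * ·)).gcd id = d * B.gcd id := by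
  rw [gcd_image]
  simpa using Finset.gcd_mul_left (s := B) (f := id) (a := d)

lemma gcd_eq_zero_iff_of_subset_Icc {N : ℕ} {A : Finset ℕ} (hA : A ⊆ Icc 1 N) :
    A.gcd id = 0 ↔ A = ∅ := by
  rw [Finset.gcd_eq_zero_iff, eq_empty_iff_forall_notMem]
  refine forall₂_congr fun a ha => ?_
  simpa using (Nat.one_le_iff_ne_zero.1 (mem_Icc.1 (hA ha)).1)

lemma image_mul_image_div {d : ℕ} {A : Finset ℕ} (h : ∀ a ∈ A, d ∣ a) :
    (A.image (· / d)).image (d * ·) = A := by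
  rw [image_image]
  conv_rhs => rw [← image_id (s := A)]
  exact image_congr fun a ha => Nat.mul_div_cancel' (h a ha)

lemma image_div_image_mul {d : ℕ} (hd : 0 < d) (B : Finset ℕ) :
    (B.image (d * ·)).image (· / d) = B := by
  rw [image_image]
  conv_rhs => rw [← image_id (s := B)]
  exact image_congr fun b _ => Nat.mul_div_cancel_left b hd

lemma card_filter_gcd_eq (N : ℕ) {d : ℕ} (hd : 0 < d) :
    #{A ∈ (Icc 1 N).powerset | A.gcd id = d} = f (N / d) := by
  refine card_nbij' (·.image (· / d)) (·.image (d * ·)) ?_ ?_ ?_ ?_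
  · intro A hA
    obtain ⟨hAN, hgcd⟩ := mem_filter.1 hA
    have hdvd : ∀ a ∈ A, d ∣ a := fun a ha => hgcd ▸ gcd_dvd ha
    refine mem_filter.2 ⟨mem_powerset.2 fun x hx => ?_, ?_⟩
    · obtain ⟨a, ha, rfl⟩ := mem_image.1 hx
      have haN := mem_Icc.1 (mem_powerset.1 hAN ha)
      exact mem_Icc.2 ⟨Nat.div_pos (Nat.le_of_dvd haN.1 (hdvd a ha)) hd,
        Nat.div_le_div_right haN.2⟩
    · apply Nat.eq_of_mul_eq_mul_left hd
      rw [← gcd_image_mul_left, image_mul_image_div hdvd, hgcd, mul_one]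
  · intro B hB
    obtain ⟨hBN, hgcd⟩ := mem_filter.1 hB
    refine mem_filter.2 ⟨mem_powerset.2 fun x hx => ?_, ?_⟩
    · obtain ⟨b, hb, rfl⟩ := mem_image.1 hx
      have hbN := mem_Icc.1 (mem_powerset.1 hBN hb)
      exact mem_Icc.2 ⟨Nat.mul_pos hd hbN.1,
        (Nat.mul_le_mul_left d hbN.2).trans (Nat.mul_div_le N d)⟩
    · rw [gcd_image_mul_left, hgcd, mul_one]
  · intro A hA
    obtain ⟨-, hgcd⟩ := mem_filter.1 hA
    exact image_mul_image_div fun a ha => hgcd ▸ gcd_dvd ha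
  · exact fun B _ => image_div_image_mul hd B

lemma card_filter_gcd_eq_sum (N : ℕ) (P : ℕ → Prop) [DecidablePred P] (h0 : ¬ P 0) :
    #{A ∈ (Icc 1 N).powerset | P (A.gcd id)} = ∑ d ∈ Icc 1 N with P d, f (N / d) := by
  rw [card_eq_sum_card_fiberwise (f := fun A => A.gcd id) (t := {d ∈ Icc 1 N | P d})]
  · refine sum_congr rfl fun d hd => ?_
    obtain ⟨hdN, hPd⟩ := mem_filter.1 hd
    rw [filter_filter, ← card_filter_gcd_eq N (mem_Icc.1 hdN).1]
    congr 1
    exact filter_congr fun A _ => ⟨And.right, fun h => ⟨h ▸ hPd, h⟩⟩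
  · intro A hA
    obtain ⟨hAN, hPA⟩ := mem_filter.1 hA
    have hAN := mem_powerset.1 hAN
    have hne : A.gcd id ≠ 0 := fun h => h0 (h ▸ hPA)
    obtain ⟨a, ha⟩ := nonempty_iff_ne_empty.2 ((gcd_eq_zero_iff_of_subset_Icc hAN).not.1 hne)
    have haN := mem_Icc.1 (hAN ha)
    have hle : A.gcd id ≤ a := Nat.le_of_dvd haN.1 (gcd_dvd ha)
    simp only [coe_filter, Set.mem_ofPred_eq, mem_Icc]
    exact ⟨⟨Nat.one_le_iff_ne_zero.2 hne, hle.trans haN.2⟩, hPA⟩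

lemma sum_f_div_add_one (N : ℕ) : ∑ d ∈ Icc 1 N, f (N / d) + 1 = 2 ^ N := by
  have h := card_filter_gcd_eq_sum N (0 < ·) (lt_irrefl 0)
  rw [show {d ∈ Icc 1 N | 0 < d} = Icc 1 N from
    filter_true_of_mem fun d hd => (mem_Icc.1 hd).1] at h
  have herase : {A ∈ (Icc 1 N).powerset | 0 < A.gcd id} = (Icc 1 N).powerset.erase ∅ := by
    ext A
    rw [mem_filter, mem_erase, mem_powerset, Nat.pos_iff_ne_zero]
    exact ⟨fun ⟨hA, h0⟩ => ⟨(gcd_eq_zero_iff_of_subset_Icc hA).not.1 h0, hA⟩,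
      fun ⟨h0, hA⟩ => ⟨hA, (gcd_eq_zero_iff_of_subset_Icc hA).not.2 h0⟩⟩
  rw [← h, herase, card_erase_add_one (empty_mem_powerset _), card_powerset, Nat.card_Icc,
    Nat.add_sub_cancel]

lemma f_le_two_pow (N : ℕ) : f N ≤ 2 ^ N := by
  calc f N ≤ #(Icc 1 N).powerset := card_filter_le _ _
    _ = 2 ^ N := by rw [card_powerset, Nat.card_Icc, Nat.add_sub_cancel]

lemma sum_Icc_f_div_le (N : ℕ) {k : ℕ} (hk : 0 < k) :
    ∑ d ∈ Icc k N, f (N / d) ≤ N * 2 ^ (N / k) := by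
  calc ∑ d ∈ Icc k N, f (N / d) ≤ #(Icc k N) • 2 ^ (N / k) := by
        refine sum_le_card_nsmul _ _ _ fun d hd => (f_le_two_pow _).trans ?_
        exact Nat.pow_le_pow_right two_pos (Nat.div_le_div_left (mem_Icc.1 hd).1 hk)
    _ ≤ N * 2 ^ (N / k) := by
        rw [smul_eq_mul, Nat.card_Icc]
        gcongr
        omega

lemma two_pow_le_f_add (N : ℕ) : 2 ^ N ≤ f N + N * 2 ^ (N / 2) + 1 := by
  calc 2 ^ N = ∑ d ∈ Icc 1 N, f (N / d) + 1 := (sum_f_div_add_one N).symm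
    _ ≤ ∑ d ∈ insert 1 (Icc 2 N), f (N / d) + 1 := by
        gcongr
        intro d hd
        rw [mem_insert, mem_Icc]
        have := mem_Icc.1 hd
        omega
    _ = f N + ∑ d ∈ Icc 2 N, f (N / d) + 1 := by rw [sum_insert (by simp), Nat.div_one]
    _ ≤ f N + N * 2 ^ (N / 2) + 1 := by grw [sum_Icc_f_div_le N two_pos]

lemma g_eq_sum (N : ℕ) :
    g N = ∑ d ∈ Icc 1 N with 1 < d ∧ Nat.gcd d (N + 1) = 1, f (N / d) :=
  card_filter_gcd_eq_sum N (fun d => 1 < d ∧ Nat.gcd d (N + 1) = 1) (by simp)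

lemma f_div_two_add_f_div_three_le_g {N : ℕ} (hN : 3 ≤ N) (h2 : Nat.Coprime 2 (N + 1))
    (h3 : Nat.Coprime 3 (N + 1)) : f (N / 2) + f (N / 3) ≤ g N := by
  rw [g_eq_sum, ← sum_pair (f := fun d => f (N / d)) (show (2 : ℕ) ≠ 3 by norm_num)]
  refine sum_le_sum_of_subset fun d hd => ?_
  rcases mem_insert.1 hd with rfl | hd
  · exact mem_filter.2 ⟨mem_Icc.2 ⟨by omega, by omega⟩, by omega, h2⟩
  · rw [mem_singleton.1 hd]
    exact mem_filter.2 ⟨mem_Icc.2 ⟨by omega, hN⟩, by omega, h3⟩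

lemma g_le_sum_add (N : ℕ) (S : Finset ℕ)
    (hS : ∀ d, 1 < d → d ≤ 3 → Nat.Coprime d (N + 1) → d ∈ S) :
    g N ≤ ∑ d ∈ S, f (N / d) + N * 2 ^ (N / 4) := by
  rw [g_eq_sum, ← sum_filter_add_sum_filter_not _ (· ≤ 3)]
  gcongr ?_ + ?_
  · refine sum_le_sum_of_subset fun d hd => ?_
    simp only [mem_filter, mem_Icc] at hd
    exact hS d hd.1.2.1 hd.2 hd.1.2.2
  · refine (sum_le_sum_of_subset fun d hd => ?_).trans (sum_Icc_f_div_le N four_pos)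
    simp only [mem_filter, mem_Icc] at hd ⊢
    omega

lemma le_two_pow_div_four_add_two (n : ℕ) : n ≤ 2 ^ (n / 4 + 2) := by
  have := (n / 4).lt_two_pow_self
  rw [pow_add]
  omega

lemma mul_two_pow_le_two_pow {n a e c : ℕ} (ha : a ≤ 8 * n) (h : n / 4 + 5 + e ≤ c) :
    a * 2 ^ e ≤ 2 ^ c :=
  calc a * 2 ^ e ≤ 2 ^ (n / 4 + 5) * 2 ^ e := by
        gcongr
        have := le_two_pow_div_four_add_two n
        rw [pow_add] at this ⊢
        omega
    _ ≤ 2 ^ c := by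
        rw [← pow_add]
        exact Nat.pow_le_pow_right two_pos h

lemma two_pow_add_two_pow_le_g_six_mul_sub_two {n : ℕ} (hn : 64 ≤ n) :
    2 ^ (3 * n - 1) + 2 ^ (2 * n - 1) ≤ g (6 * n - 2) + 2 ^ (2 * n - 6) := by
  have hg := f_div_two_add_f_div_three_le_g (N := 6 * n - 2) (by omega)
    (Nat.prime_two.coprime_iff_not_dvd.2 (by omega))
    (Nat.prime_three.coprime_iff_not_dvd.2 (by omega))
  rw [show (6 * n - 2) / 2 = 3 * n - 1 by omega, show (6 * n - 2) / 3 = 2 * n - 1 by omega] at hg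
  have e₁ : (3 * n - 1) * 2 ^ ((3 * n - 1) / 2) ≤ 2 ^ (2 * n - 8) :=
    mul_two_pow_le_two_pow (n := n) (by omega) (by omega)
  have e₂ : (2 * n - 1) * 2 ^ ((2 * n - 1) / 2) ≤ 2 ^ (2 * n - 8) :=
    mul_two_pow_le_two_pow (n := n) (by omega) (by omega)
  have e₃ : 2 ^ (2 * n - 6) = 2 ^ 2 * 2 ^ (2 * n - 8) := by
    rw [← pow_add]
    congr 1
    omega
  linarith [two_pow_le_f_add (3 * n - 1), two_pow_le_f_add (2 * n - 1),
    Nat.one_le_two_pow (n := 2 * n - 8)]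

lemma g_six_mul_le {n : ℕ} (hn : 64 ≤ n) :
    g (6 * n) ≤ 2 ^ (3 * n) + 2 ^ (2 * n) + 2 ^ (2 * n - 6) := by
  have hg := g_le_sum_add (6 * n) {2, 3} fun d h1 h3 _ => by
    rw [mem_insert, mem_singleton]
    omega
  rw [sum_pair (by norm_num), show 6 * n / 2 = 3 * n by omega,
    show 6 * n / 3 = 2 * n by omega] at hg
  have e : 6 * n * 2 ^ (6 * n / 4) ≤ 2 ^ (2 * n - 6) :=
    mul_two_pow_le_two_pow (n := n) (by omega) (by omega)
  linarith [f_le_two_pow (3 * n), f_le_two_pow (2 * n)]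

lemma g_six_mul_sub_four_le {n : ℕ} (hn : 64 ≤ n) :
    g (6 * n - 4) ≤ 2 ^ (3 * n - 2) + 2 ^ (2 * n - 6) := by
  have hg := g_le_sum_add (6 * n - 4) {2} fun d h1 h3 hcop => by
    obtain rfl | rfl : d = 2 ∨ d = 3 := by omega
    · exact mem_singleton_self 2
    · exact absurd (Nat.prime_three.coprime_iff_not_dvd.1 hcop) (by omega)
  rw [sum_singleton, show (6 * n - 4) / 2 = 3 * n - 2 by omega] at hg
  have e : (6 * n - 4) * 2 ^ ((6 * n - 4) / 4) ≤ 2 ^ (2 * n - 6) :=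
    mul_two_pow_le_two_pow (n := n) (by omega) (by omega)
  linarith [f_le_two_pow (3 * n - 2)]

lemma mul_lt_sq_of_two_pow_bounds {n L M K : ℕ} (hn : 6 ≤ n)
    (hL : 2 ^ (3 * n - 1) + 2 ^ (2 * n - 1) ≤ L + 2 ^ (2 * n - 6))
    (hM : M ≤ 2 ^ (3 * n) + 2 ^ (2 * n) + 2 ^ (2 * n - 6))
    (hK : K ≤ 2 ^ (3 * n - 2) + 2 ^ (2 * n - 6)) : M * K < L ^ 2 := by
  obtain ⟨m, rfl⟩ : ∃ m, n = m + 6 := ⟨n - 6, by omega⟩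
  rw [show 3 * (m + 6) - 1 = 3 * m + 17 by omega, show 2 * (m + 6) - 1 = 2 * m + 11 by omega,
    show 2 * (m + 6) - 6 = 2 * m + 6 by omega] at hL
  rw [show 2 * (m + 6) - 6 = 2 * m + 6 by omega, show 3 * (m + 6) = 3 * m + 18 by omega,
    show 2 * (m + 6) = 2 * m + 12 by omega] at hM
  rw [show 3 * (m + 6) - 2 = 3 * m + 16 by omega, show 2 * (m + 6) - 6 = 2 * m + 6 by omega] at hK
  simp only [pow_add, pow_mul'] at hL hM hK
  have hu : 0 < 2 ^ m := by positivity
  calc M * K ≤ (2 ^ 18 * (2 ^ m) ^ 3 + 4160 * (2 ^ m) ^ 2) *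
        (2 ^ 16 * (2 ^ m) ^ 3 + 64 * (2 ^ m) ^ 2) := Nat.mul_le_mul (by linarith) (by linarith)
    _ < (2 ^ 17 * (2 ^ m) ^ 3 + 1984 * (2 ^ m) ^ 2) ^ 2 := by
        nlinarith [pow_pos hu 5, pow_pos hu 4]
    _ ≤ L ^ 2 := Nat.pow_le_pow_left (by linarith) 2

theorem stmt_12 :
    ∃ n₀ : ℕ, 0 < n₀ ∧ ∀ n : ℕ, n₀ ≤ n →
      g (6 * n - 2) ^ 2 > g (6 * n) * g (6 * n - 4) :=
  ⟨64, by norm_num, fun _ hn => mul_lt_sq_of_two_pow_bounds (by omega)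
    (two_pow_add_two_pow_le_g_six_mul_sub_two hn) (g_six_mul_le hn) (g_six_mul_sub_four_le hn)⟩
end

section
/- There exists a positive integer n₀ such that for every integer n ≥ n₀, g(6n)² > g(6n−2)·g(6n+2); equivalently, g(6n)/g(6n−2) > g(6n+2)/g(6n). -/
/-!
A set counted by `g n` consists of multiples of a prime `p ≤ n` coprime to `n + 1`, so
`g n ≤ ∑ 2 ^ ⌊n / p⌋`, where the primes `p ≥ 5` contribute only `O(n 2 ^ (n / 5))`.
Conversely, when `n + 1` is prime to `6`, the nonempty sets of even numbers and the sets of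
multiples of `3` that are not all even have a nontrivial gcd, and only `O(n 2 ^ (n / 5))` sets
with a nontrivial gcd share a prime factor `q ≥ 5` with `n + 1`. With `x = 2 ^ N` this gives
`g (6N) = x³ + x² + o(x²)`, `g (6N - 2) = x³/2 + x²/2 + o(x²)` and, as `3 ∣ 6N + 3`,
`g (6N + 2) = 2x³ + o(x²)`: the `x⁵` coefficient is `2` in `g (6N) ^ 2` but only `1` in
`g (6N - 2) * g (6N + 2)`.
-/

open Finset

lemma card_le_sum_two_pow_card_of_forall_subset {α ι : Type*} [DecidableEq α]
    {T : Finset (Finset α)} {S : Finset ι} (F : ι → Finset α)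
    (h : ∀ A ∈ T, ∃ i ∈ S, A ⊆ F i) : #T ≤ ∑ i ∈ S, 2 ^ #(F i) :=
  calc #T ≤ #(S.biUnion fun i ↦ (F i).powerset) := card_le_card fun A hA ↦ by
        obtain ⟨i, hi, hAi⟩ := h A hA
        exact mem_biUnion.2 ⟨i, hi, mem_powerset.2 hAi⟩
    _ ≤ ∑ i ∈ S, #(F i).powerset := card_biUnion_le
    _ = ∑ i ∈ S, 2 ^ #(F i) := by simp only [card_powerset]

lemma sum_two_pow_div_le_of_subset_Icc {n : ℕ} {S : Finset ℕ} (hS : S ⊆ Icc 5 n) :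
    ∑ p ∈ S, 2 ^ (n / p) ≤ n * 2 ^ (n / 5) :=
  calc ∑ p ∈ S, 2 ^ (n / p) ≤ #S • 2 ^ (n / 5) := sum_le_card_nsmul _ _ _ fun p hp ↦
        Nat.pow_le_pow_right two_pos (Nat.div_le_div_left (mem_Icc.1 (hS hp)).1 (by norm_num))
    _ ≤ n * 2 ^ (n / 5) := by
        rw [smul_eq_mul]
        gcongr
        exact (card_le_card hS).trans (by simp)

section Multiples

variable {d n : ℕ} {A : Finset ℕ}

def multiplesUpTo (d n : ℕ) : Finset ℕ := {x ∈ Icc 1 n | d ∣ x}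

lemma card_multiplesUpTo (d n : ℕ) : #(multiplesUpTo d n) = n / d := by
  rw [multiplesUpTo, show Icc 1 n = Ioc 0 n from Icc_add_one_left_eq_Ioc 0 n]
  exact Nat.Ioc_filter_dvd_card_eq_div n d

lemma subset_multiplesUpTo_iff (hA : A ⊆ Icc 1 n) : A ⊆ multiplesUpTo d n ↔ d ∣ A.gcd id := by
  rw [Finset.dvd_gcd_iff]
  exact ⟨fun h x hx ↦ (mem_filter.1 (h hx)).2, fun h x hx ↦ mem_filter.2 ⟨hA hx, h x hx⟩⟩

lemma gcd_ne_zero_of_subset_Icc (hA : A ⊆ Icc 1 n) (hne : A.Nonempty) : A.gcd id ≠ 0 := by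
  obtain ⟨x, hx⟩ := hne
  rw [Ne, Finset.gcd_eq_zero_iff]
  exact fun h ↦ Nat.one_le_iff_ne_zero.1 (mem_Icc.1 (hA hx)).1 (h x hx)

lemma le_of_dvd_gcd_of_subset_Icc (hA : A ⊆ Icc 1 n) (hne : A.Nonempty) (hd : d ∣ A.gcd id) :
    d ≤ n := by
  obtain ⟨x, hx⟩ := hne
  have hxI := mem_Icc.1 (hA hx)
  exact (Nat.le_of_dvd hxI.1 (hd.trans (gcd_dvd hx))).trans hxI.2

end Multiples

def nontrivialGcdSets (n : ℕ) : Finset (Finset ℕ) := {A ∈ (Icc 1 n).powerset | 1 < A.gcd id}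

lemma mem_nontrivialGcdSets {n : ℕ} {A : Finset ℕ} :
    A ∈ nontrivialGcdSets n ↔ A ⊆ Icc 1 n ∧ 1 < A.gcd id := by
  rw [nontrivialGcdSets, mem_filter, mem_powerset]

lemma nonempty_of_mem_nontrivialGcdSets {n : ℕ} {A : Finset ℕ} (hA : A ∈ nontrivialGcdSets n) :
    A.Nonempty :=
  nonempty_iff_ne_empty.2 fun h ↦ by simp [h, mem_nontrivialGcdSets] at hA

lemma mem_nontrivialGcdSets_of_subset_multiplesUpTo {d n : ℕ} {A : Finset ℕ} (hd : 2 ≤ d)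
    (hA : A ⊆ multiplesUpTo d n) (hne : A.Nonempty) : A ∈ nontrivialGcdSets n := by
  have hAI : A ⊆ Icc 1 n := hA.trans (filter_subset _ _)
  have hdA : d ∣ A.gcd id := (subset_multiplesUpTo_iff hAI).1 hA
  have hpos := Nat.pos_of_ne_zero (gcd_ne_zero_of_subset_Icc hAI hne)
  exact mem_nontrivialGcdSets.2 ⟨hAI, (by omega : 1 < d).trans_le (Nat.le_of_dvd hpos hdA)⟩

lemma g_eq_card_filter_nontrivialGcdSets (n : ℕ) :
    g n = #{A ∈ nontrivialGcdSets n | Nat.gcd (A.gcd id) (n + 1) = 1} := by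
  rw [nontrivialGcdSets, filter_filter]
  rfl

lemma g_le_sum_two_pow_div (n : ℕ) :
    g n ≤ ∑ p ∈ Icc 2 n with p.Prime ∧ p.Coprime (n + 1), 2 ^ (n / p) := by
  rw [g_eq_card_filter_nontrivialGcdSets]
  simp_rw [← card_multiplesUpTo _ n]
  refine card_le_sum_two_pow_card_of_forall_subset _ fun A hA ↦ ?_
  obtain ⟨hA, hcop⟩ := mem_filter.1 hA
  obtain ⟨hAI, hgcd⟩ := mem_nontrivialGcdSets.1 hA
  have hne := nonempty_of_mem_nontrivialGcdSets hA
  have hp : (A.gcd id).minFac.Prime := Nat.minFac_prime hgcd.ne'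
  have hpA : (A.gcd id).minFac ∣ A.gcd id := Nat.minFac_dvd _
  refine ⟨_, mem_filter.2 ⟨mem_Icc.2 ⟨hp.two_le, le_of_dvd_gcd_of_subset_Icc hAI hne hpA⟩, hp,
    Nat.Coprime.coprime_dvd_left hpA hcop⟩, (subset_multiplesUpTo_iff hAI).2 hpA⟩

lemma sum_filter_prime_two_pow_div_le (n : ℕ) (P : ℕ → Prop) [DecidablePred P] :
    ∑ p ∈ Icc 2 n with p.Prime ∧ P p, 2 ^ (n / p) ≤
      ∑ p ∈ ({2, 3} : Finset ℕ) with P p, 2 ^ (n / p) + n * 2 ^ (n / 5) := by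
  rw [← sum_filter_add_sum_filter_not _ (fun p : ℕ ↦ p < 5)]
  gcongr
  · intro p hp
    simp only [mem_filter, mem_Icc] at hp
    obtain ⟨⟨-, hp, hP⟩, h5⟩ := hp
    simp only [mem_filter, mem_insert, mem_singleton]
    exact ⟨by by_contra! h; exact h5.not_ge (hp.five_le_of_ne_two_of_ne_three h.1 h.2), hP⟩
  · refine sum_two_pow_div_le_of_subset_Icc fun p hp ↦ ?_
    simp only [mem_filter, mem_Icc] at hp ⊢
    omega

lemma g_le (n : ℕ) : g n ≤ 2 ^ (n / 2) + 2 ^ (n / 3) + n * 2 ^ (n / 5) := by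
  refine (g_le_sum_two_pow_div n).trans <| (sum_filter_prime_two_pow_div_le n _).trans ?_
  gcongr
  exact (sum_le_sum_of_subset (filter_subset _ _)).trans (sum_pair (by norm_num)).le

lemma g_le_of_three_dvd {n : ℕ} (h : 3 ∣ n + 1) : g n ≤ 2 ^ (n / 2) + n * 2 ^ (n / 5) := by
  refine (g_le_sum_two_pow_div n).trans <| (sum_filter_prime_two_pow_div_le n _).trans ?_
  gcongr
  refine (sum_le_sum_of_subset fun p hp ↦ ?_).trans (sum_singleton _ 2).le
  simp only [mem_filter, mem_insert, mem_singleton] at hp ⊢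
  obtain ⟨rfl | rfl, hcop⟩ := hp
  · rfl
  · exact absurd h ((Nat.Prime.coprime_iff_not_dvd Nat.prime_three).1 hcop)

lemma card_nontrivialGcdSets_le {n : ℕ} (h2 : ¬ 2 ∣ n + 1) (h3 : ¬ 3 ∣ n + 1) :
    #(nontrivialGcdSets n) ≤ g n + n * 2 ^ (n / 5) := by
  rw [← card_filter_add_card_filter_not (s := nontrivialGcdSets n)
    (fun A ↦ Nat.gcd (A.gcd id) (n + 1) = 1), ← g_eq_card_filter_nontrivialGcdSets]
  gcongr
  refine (card_le_sum_two_pow_card_of_forall_subset (S := Icc 5 n) (multiplesUpTo · n)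
    fun A hA ↦ ?_).trans ?_
  · obtain ⟨hA, hncop⟩ := mem_filter.1 hA
    have hAI := (mem_nontrivialGcdSets.1 hA).1
    have hne := nonempty_of_mem_nontrivialGcdSets hA
    set q := (Nat.gcd (A.gcd id) (n + 1)).minFac
    have hq : q.Prime := Nat.minFac_prime hncop
    have hqA : q ∣ A.gcd id := (Nat.minFac_dvd _).trans (Nat.gcd_dvd_left _ _)
    have hqn : q ∣ n + 1 := (Nat.minFac_dvd _).trans (Nat.gcd_dvd_right _ _)
    have hq5 : 5 ≤ q := hq.five_le_of_ne_two_of_ne_three (by rintro h; exact h2 (h ▸ hqn))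
      (by rintro h; exact h3 (h ▸ hqn))
    exact ⟨q, mem_Icc.2 ⟨hq5, le_of_dvd_gcd_of_subset_Icc hAI hne hqA⟩,
      (subset_multiplesUpTo_iff hAI).2 hqA⟩
  · simp_rw [card_multiplesUpTo]
    exact sum_two_pow_div_le_of_subset_Icc subset_rfl

lemma two_pow_add_two_pow_le_card_nontrivialGcdSets (n : ℕ) :
    2 ^ (n / 2) + 2 ^ (n / 3) ≤ #(nontrivialGcdSets n) + 1 + 2 ^ (n / 6) := by
  set evens := (multiplesUpTo 2 n).powerset.erase ∅
  set notAllEven := (multiplesUpTo 3 n).powerset \ (multiplesUpTo 6 n).powerset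
  have h63 : multiplesUpTo 6 n ⊆ multiplesUpTo 3 n := fun x hx ↦ by
    obtain ⟨hxI, hx6⟩ := mem_filter.1 hx
    exact mem_filter.2 ⟨hxI, by omega⟩
  have hevens : #evens = 2 ^ (n / 2) - 1 := by
    rw [card_erase_of_mem (empty_mem_powerset _), card_powerset, card_multiplesUpTo]
  have hnotAllEven : #notAllEven = 2 ^ (n / 3) - 2 ^ (n / 6) := by
    rw [card_sdiff_of_subset (powerset_mono.2 h63), card_powerset, card_powerset,
      card_multiplesUpTo, card_multiplesUpTo]
  have hdisj : Disjoint evens notAllEven := by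
    refine disjoint_left.2 fun A h₂ h₃ ↦ ?_
    simp only [evens, notAllEven, mem_erase, mem_sdiff, mem_powerset] at h₂ h₃
    refine h₃.2 fun x hx ↦ ?_
    have hx2 := (mem_filter.1 (h₂.2 hx)).2
    obtain ⟨hxI, hx3⟩ := mem_filter.1 (h₃.1 hx)
    exact mem_filter.2 ⟨hxI, by omega⟩
  have hsub : evens ∪ notAllEven ⊆ nontrivialGcdSets n := by
    refine union_subset (fun A hA ↦ ?_) (fun A hA ↦ ?_)
    · obtain ⟨hne, hA⟩ := mem_erase.1 hA
      exact mem_nontrivialGcdSets_of_subset_multiplesUpTo le_rfl (mem_powerset.1 hA)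
        (nonempty_iff_ne_empty.2 hne)
    · obtain ⟨hA, hA6⟩ := mem_sdiff.1 hA
      refine mem_nontrivialGcdSets_of_subset_multiplesUpTo (by norm_num) (mem_powerset.1 hA)
        (nonempty_iff_ne_empty.2 ?_)
      rintro rfl
      exact hA6 (empty_mem_powerset _)
  have hcard := card_le_card hsub
  rw [card_union_of_disjoint hdisj] at hcard
  have : 2 ^ (n / 6) ≤ 2 ^ (n / 3) := Nat.pow_le_pow_right two_pos (by omega)
  have : 1 ≤ 2 ^ (n / 2) := Nat.one_le_two_pow
  omega

lemma two_pow_add_two_pow_le_g {n : ℕ} (h2 : ¬ 2 ∣ n + 1) (h3 : ¬ 3 ∣ n + 1) :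
    2 ^ (n / 2) + 2 ^ (n / 3) ≤ g n + n * 2 ^ (n / 5) + 1 + 2 ^ (n / 6) := by
  have := two_pow_add_two_pow_le_card_nontrivialGcdSets n
  have := card_nontrivialGcdSets_le h2 h3
  omega

lemma mul_two_pow_div_five_le {N m : ℕ} (hN : 130 ≤ N) (hm : m ≤ 6 * N + 2) :
    m * 2 ^ (m / 5) ≤ (2 ^ (N - 3)) ^ 2 := by
  have hlin : m ≤ 2 ^ (6 * (N / 8)) := by
    have := one_add_le_pow_of_two_add_nonneg (a := 63) (by positivity) (N / 8)
    rw [pow_mul]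
    norm_num at this ⊢
    omega
  calc m * 2 ^ (m / 5) ≤ 2 ^ (6 * (N / 8)) * 2 ^ ((6 * N + 2) / 5) :=
        Nat.mul_le_mul hlin (Nat.pow_le_pow_right two_pos (by omega))
    _ = 2 ^ (6 * (N / 8) + (6 * N + 2) / 5) := (pow_add _ _ _).symm
    _ ≤ (2 ^ (N - 3)) ^ 2 := by
        rw [← pow_mul]
        exact Nat.pow_le_pow_right two_pos (by omega)

-- The bounds on `g (6N)`, `g (6N - 2)` and `g (6N + 2)` in units of `c = 2 ^ (N - 3)`.
lemma mul_lt_sq_of_le {a b d c : ℕ} (hc : 0 < c) (ha : 512 * c ^ 3 + 62 * c ^ 2 ≤ a)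
    (hb : b ≤ 256 * c ^ 3 + 33 * c ^ 2) (hd : d ≤ 1024 * c ^ 3 + c ^ 2) : b * d < a ^ 2 :=
  calc b * d ≤ (256 * c ^ 3 + 33 * c ^ 2) * (1024 * c ^ 3 + c ^ 2) := Nat.mul_le_mul hb hd
    _ < (512 * c ^ 3 + 62 * c ^ 2) ^ 2 := by nlinarith [pow_pos hc 4, pow_pos hc 5]
    _ ≤ a ^ 2 := Nat.pow_le_pow_left ha 2

theorem stmt_13 :
    ∃ n₀ : ℕ, 0 < n₀ ∧ ∀ n : ℕ, n₀ ≤ n →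
      g (6 * n) ^ 2 > g (6 * n - 2) * g (6 * n + 2) := by
  refine ⟨130, by norm_num, fun N hN ↦ ?_⟩
  set c := 2 ^ (N - 3)
  have hpow (a k : ℕ) : 2 ^ (a + (N - 3) * k) = 2 ^ a * c ^ k := by rw [pow_add, pow_mul]
  have hc : 127 < c := (Nat.lt_two_pow_self (n := N - 3)).trans_le' (by omega)
  have hg := two_pow_add_two_pow_le_g (n := 6 * N) (by omega) (by omega)
  rw [show 6 * N / 2 = 9 + (N - 3) * 3 by omega, show 6 * N / 3 = 6 + (N - 3) * 2 by omega,
    show 6 * N / 6 = 3 + (N - 3) * 1 by omega, hpow, hpow, hpow] at hg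
  have hgLeft := g_le (6 * N - 2)
  rw [show (6 * N - 2) / 2 = 8 + (N - 3) * 3 by omega,
    show (6 * N - 2) / 3 = 5 + (N - 3) * 2 by omega, hpow, hpow] at hgLeft
  have hgRight := g_le_of_three_dvd (n := 6 * N + 2) (by omega)
  rw [show (6 * N + 2) / 2 = 10 + (N - 3) * 3 by omega, hpow] at hgRight
  have hE : 6 * N * 2 ^ (6 * N / 5) ≤ c ^ 2 := mul_two_pow_div_five_le hN (by omega)
  have hELeft : (6 * N - 2) * 2 ^ ((6 * N - 2) / 5) ≤ c ^ 2 :=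
    mul_two_pow_div_five_le hN (by omega)
  have hERight : (6 * N + 2) * 2 ^ ((6 * N + 2) / 5) ≤ c ^ 2 := mul_two_pow_div_five_le hN le_rfl
  have hc₁ : 1 + 8 * c ≤ c ^ 2 := by nlinarith
  norm_num at hg hgLeft hgRight
  exact mul_lt_sq_of_le (c := c) (by omega) (by omega) (by omega) (by omega)
end
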